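/- Let U ∈ ℝ^{m×k} (m ≥ k) have unit-norm columns with orthogonality level μ = ‖SUT(I_k − UᵀU)‖₂ < 1/2, and let f ∈ ℝ^m, w ∈ ℝ^k satisfy Uw = f. Then ‖w‖₂ ≤ (1 − 2μ)^{-1/2} ‖f‖₂. -/

import Mathlib

/-! Write `T = SUT (I - UᵀU)`. Unit columns make `I - UᵀU` a symmetric matrix with zero diagonal,
so `UᵀU = I - T - Tᵀ` and `‖Uw‖² = ‖w‖² - 2 wᵀTw`; Cauchy–Schwarz bounds `|wᵀTw|` by `‖T‖‖w‖²`,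
hence `‖f‖² ≥ (1 - 2μ)‖w‖²`. -/

open scoped Matrix.Norms.L2Operator
open Matrix

def SUT {k : ℕ} (M : Matrix (Fin k) (Fin k) ℝ) : Matrix (Fin k) (Fin k) ℝ :=
  Matrix.of fun i j => if i < j then M i j else 0

noncomputable def enorm' {d : ℕ} (x : Fin d → ℝ) : ℝ := Real.sqrt (∑ i, x i ^ 2)

lemma enorm'_sq {d : ℕ} (x : Fin d → ℝ) : enorm' x ^ 2 = x ⬝ᵥ x := by
  rw [enorm', Real.sq_sqrt (Finset.sum_nonneg fun i _ => sq_nonneg _)]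
  simp only [dotProduct, sq]

lemma enorm'_eq_norm {d : ℕ} (x : Fin d → ℝ) :
    enorm' x = ‖(EuclideanSpace.equiv (Fin d) ℝ).symm x‖ := by
  rw [EuclideanSpace.norm_eq, enorm']
  simp [Real.norm_eq_abs, sq_abs, EuclideanSpace.equiv]

lemma SUT_add_transpose_SUT {k : ℕ} {M : Matrix (Fin k) (Fin k) ℝ} (hM : M.IsSymm)
    (hdiag : ∀ i, M i i = 0) : SUT M + (SUT M)ᵀ = M := by
  ext i j
  rcases lt_trichotomy i j with hij | rfl | hij
  · simp [SUT, hij, hij.not_gt]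
  · simp [SUT, hdiag]
  · simp [SUT, hij, hij.not_gt, hM.apply i j]

lemma one_sub_gram_eq_SUT_add_transpose {m k : ℕ} (U : Matrix (Fin m) (Fin k) ℝ)
    (hcols : ∀ j, ∑ i, U i j ^ 2 = 1) :
    1 - Uᵀ * U = SUT (1 - Uᵀ * U) + (SUT (1 - Uᵀ * U))ᵀ := by
  refine (SUT_add_transpose_SUT ?_ fun j => ?_).symm
  · exact isSymm_one.sub (by simp [IsSymm, transpose_mul])
  · simp [mul_apply, ← hcols j, sq]

lemma dotProduct_transpose_mulVec_self {n R : Type*} [Fintype n] [CommSemiring R]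
    (T : Matrix n n R) (w : n → R) :
    w ⬝ᵥ Tᵀ *ᵥ w = w ⬝ᵥ T *ᵥ w := by
  rw [dotProduct_mulVec, vecMul_transpose, dotProduct_comm]

lemma abs_dotProduct_mulVec_le {k : ℕ} (T : Matrix (Fin k) (Fin k) ℝ) (w : Fin k → ℝ) :
    |w ⬝ᵥ T *ᵥ w| ≤ ‖T‖ * enorm' w ^ 2 := by
  have hcs : |w ⬝ᵥ T *ᵥ w| ≤ enorm' w * enorm' (T *ᵥ w) := by
    rw [enorm'_eq_norm, enorm'_eq_norm]
    simpa [PiLp.inner_apply, dotProduct, mul_comm] using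
      abs_real_inner_le_norm ((EuclideanSpace.equiv (Fin k) ℝ).symm w)
        ((EuclideanSpace.equiv (Fin k) ℝ).symm (T *ᵥ w))
  have hop : enorm' (T *ᵥ w) ≤ ‖T‖ * enorm' w := by
    rw [enorm'_eq_norm, enorm'_eq_norm]
    exact l2_opNorm_mulVec T _
  calc |w ⬝ᵥ T *ᵥ w| ≤ enorm' w * (‖T‖ * enorm' w) :=
        hcs.trans (mul_le_mul_of_nonneg_left hop (Real.sqrt_nonneg _))
    _ = ‖T‖ * enorm' w ^ 2 := by ring

lemma enorm'_mulVec_sq_eq {m k : ℕ} (U : Matrix (Fin m) (Fin k) ℝ)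
    (hcols : ∀ j, ∑ i, U i j ^ 2 = 1) (w : Fin k → ℝ) :
    enorm' (U *ᵥ w) ^ 2 = enorm' w ^ 2 - 2 * (w ⬝ᵥ SUT (1 - Uᵀ * U) *ᵥ w) := by
  set T := SUT (1 - Uᵀ * U)
  have hgram : Uᵀ * U = 1 - (T + Tᵀ) := by
    rw [← one_sub_gram_eq_SUT_add_transpose U hcols, sub_sub_cancel]
  have hquad : (U *ᵥ w) ⬝ᵥ (U *ᵥ w) = w ⬝ᵥ (Uᵀ * U) *ᵥ w := by
    rw [← mulVec_mulVec, dotProduct_mulVec w Uᵀ, vecMul_transpose]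
  rw [enorm'_sq, enorm'_sq, hquad, hgram, sub_mulVec, add_mulVec, one_mulVec, dotProduct_sub,
    dotProduct_add, dotProduct_transpose_mulVec_self]
  ring

lemma one_sub_two_mul_norm_SUT_mul_sq_le {m k : ℕ} (U : Matrix (Fin m) (Fin k) ℝ)
    (hcols : ∀ j, ∑ i, U i j ^ 2 = 1) (w : Fin k → ℝ) :
    (1 - 2 * ‖SUT (1 - Uᵀ * U)‖) * enorm' w ^ 2 ≤ enorm' (U *ᵥ w) ^ 2 := by
  rw [enorm'_mulVec_sq_eq U hcols]
  linarith [(abs_le.mp (abs_dotProduct_mulVec_le (SUT (1 - Uᵀ * U)) w)).2]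

theorem stmt19_general {m k : ℕ} (U : Matrix (Fin m) (Fin k) ℝ)
    (hcols : ∀ j, ∑ i, (U i j) ^ 2 = 1)
    (μ : ℝ) (hμ : μ = ‖SUT (1 - Uᵀ * U)‖) (hμ2 : μ < 1 / 2)
    (f : Fin m → ℝ) (w : Fin k → ℝ) (h : U.mulVec w = f) :
    enorm' w ≤ (Real.sqrt (1 - 2 * μ))⁻¹ * enorm' f := by
  subst h
  have hpos : 0 < 1 - 2 * μ := by linarith
  rw [← div_eq_inv_mul, le_div_iff₀ (Real.sqrt_pos.mpr hpos)]
  refine le_of_pow_le_pow_left₀ two_ne_zero (Real.sqrt_nonneg _) ?_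
  rw [mul_pow, Real.sq_sqrt hpos.le, mul_comm, hμ]
  exact one_sub_two_mul_norm_SUT_mul_sq_le U hcols w

/-- If `U` has unit columns with orthogonality level `μ < 1/2` and `Uw = f`,
then `‖w‖₂ ≤ (1 − 2μ)^{-1/2}‖f‖₂`. -/
theorem stmt19 {m k : ℕ} (hmk : k ≤ m) (U : Matrix (Fin m) (Fin k) ℝ)
    (hcols : ∀ j, ∑ i, (U i j) ^ 2 = 1)
    (μ : ℝ) (hμ : μ = ‖SUT (1 - Uᵀ * U)‖) (hμ2 : μ < 1 / 2)
    (f : Fin m → ℝ) (w : Fin k → ℝ) (h : U.mulVec w = f) :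
    enorm' w ≤ (Real.sqrt (1 - 2 * μ))⁻¹ * enorm' f :=
  stmt19_general U hcols μ hμ hμ2 f w h
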